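/- arXiv:1910.00191 — 3 statements merged into one kernel-verified Lean document; each statement's English description precedes it below -/
import Mathlib

section
/- Let M be a nonempty compact metric space. Then there exists a Borel probability measure μ on M that is invariant under the isometry group of M, i.e., for every surjective isometry α : M → M and every Borel set B ⊆ M one has μ(α⁻¹(B)) = μ(B). (Equivalently, ∫ (f ∘ α) dμ = ∫ f dμ for every continuous f : M → ℝ and every surjective isometry α.) On a compact metric space such a Borel measure is automatically Radon. -/
open MeasureTheory
set_option linter.unusedSectionVars false

section
variable {M : Type*} [MetricSpace M] [CompactSpace M] [Nonempty M]

namespace IsoGrp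

/-- Embed the isometry group into `C(M,M) × C(M,M)`. -/
def e (g : M ≃ᵢ M) : C(M, M) × C(M, M) :=
  (⟨g, g.continuous⟩, ⟨g.symm, g.symm.continuous⟩)

lemma e_injective : Function.Injective (e (M := M)) := by
  intro g h hgh
  ext x
  exact ContinuousMap.congr_fun (congrArg Prod.fst hgh) x

instance : TopologicalSpace (M ≃ᵢ M) := TopologicalSpace.induced e inferInstance

lemma isEmbedding_e : Topology.IsEmbedding (e (M := M)) := ⟨⟨rfl⟩, e_injective⟩

instance : T2Space (M ≃ᵢ M) := isEmbedding_e.t2Space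

lemma isCompact_isometries : IsCompact {f : C(M, M) | Isometry f} := by
  apply ArzelaAscoli.isCompact_of_equicontinuous
  · have h1 : ContinuousMap.toFun '' {f : C(M, M) | Isometry f} = {f : M → M | Isometry f} := by
      ext f
      constructor
      · rintro ⟨g, hg, rfl⟩; exact hg
      · intro hf; exact ⟨⟨f, hf.continuous⟩, hf, rfl⟩
    rw [h1]
    have h2 : IsClosed {f : M → M | Isometry f} := by
      have : {f : M → M | Isometry f} =
          ⋂ (x : M) (y : M), {f : M → M | edist (f x) (f y) = edist x y} := by
        ext f; simp [Isometry]
      rw [this]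
      exact isClosed_iInter fun x => isClosed_iInter fun y =>
        isClosed_eq (by fun_prop) continuous_const
    exact h2.isCompact
  · intro x
    rw [Metric.equicontinuousAt_iff]
    intro ε hε
    exact ⟨ε, hε, fun y hy i => by rw [(i.2).dist_eq, dist_comm]; exact hy⟩

end IsoGrp
end

section
variable {M : Type*} [MetricSpace M] [CompactSpace M] [Nonempty M]
namespace IsoGrp

lemma range_e : Set.range (e (M := M)) =
    {p : C(M, M) × C(M, M) | Isometry p.1 ∧ Isometry p.2 ∧
      p.1.comp p.2 = ContinuousMap.id M ∧ p.2.comp p.1 = ContinuousMap.id M} := by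
  ext ⟨f, g⟩
  constructor
  · rintro ⟨α, hα⟩
    rw [← hα]
    refine ⟨α.isometry, α.symm.isometry, ?_, ?_⟩ <;> ext x <;> simp [e]
  · rintro ⟨hf, hg, h1, h2⟩
    refine ⟨⟨⟨f, g, fun x => ContinuousMap.congr_fun h2 x,
      fun x => ContinuousMap.congr_fun h1 x⟩, hf⟩, ?_⟩
    simp only [e, Prod.mk.injEq]
    exact ⟨rfl, rfl⟩

lemma isCompact_range_e : IsCompact (Set.range (e (M := M))) := by
  rw [range_e]
  have hS := isCompact_isometries (M := M)
  refine IsCompact.of_isClosed_subset (hS.prod hS) ?_ ?_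
  · refine IsClosed.inter (hS.isClosed.preimage continuous_fst) ?_
    refine IsClosed.inter (hS.isClosed.preimage continuous_snd) ?_
    refine IsClosed.inter ?_ ?_
    · exact isClosed_eq (ContinuousMap.continuous_comp'.comp
        (continuous_snd.prodMk continuous_fst)) continuous_const
    · exact isClosed_eq (ContinuousMap.continuous_comp'.comp
        (continuous_fst.prodMk continuous_snd)) continuous_const
  · rintro ⟨f, g⟩ ⟨hf, hg, -, -⟩
    exact ⟨hf, hg⟩

instance : CompactSpace (M ≃ᵢ M) := by
  have : CompactSpace (Set.range (e (M := M))) := isCompact_iff_compactSpace.mp isCompact_range_e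
  exact isEmbedding_e.toHomeomorph.symm.compactSpace

end IsoGrp
end

section
variable {M : Type*} [MetricSpace M] [CompactSpace M] [Nonempty M]
namespace IsoGrp

lemma e_mul (g h : M ≃ᵢ M) :
    e (g * h) = ((e g).1.comp (e h).1, (e h).2.comp (e g).2) := by
  simp only [e, Prod.mk.injEq]
  constructor <;> ext x <;> rfl

lemma e_inv (g : M ≃ᵢ M) : e g⁻¹ = Prod.swap (e g) := rfl

lemma continuous_e : Continuous (e (M := M)) := continuous_induced_dom

instance : IsTopologicalGroup (M ≃ᵢ M) where
  continuous_mul := by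
    apply continuous_induced_rng.2
    show Continuous (fun p : (M ≃ᵢ M) × (M ≃ᵢ M) => e (p.1 * p.2))
    have : (fun p : (M ≃ᵢ M) × (M ≃ᵢ M) => e (p.1 * p.2)) =
        fun p => ((e p.1).1.comp (e p.2).1, (e p.2).2.comp (e p.1).2) := by
      funext p; exact e_mul p.1 p.2
    rw [this]
    refine Continuous.prodMk ?_ ?_
    · exact ContinuousMap.continuous_comp'.comp
        (((continuous_fst.comp (continuous_e.comp continuous_snd))).prodMk
          (continuous_fst.comp (continuous_e.comp continuous_fst)))
    · exact ContinuousMap.continuous_comp'.comp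
        (((continuous_snd.comp (continuous_e.comp continuous_fst))).prodMk
          (continuous_snd.comp (continuous_e.comp continuous_snd)))
  continuous_inv := by
    apply continuous_induced_rng.2
    show Continuous (fun g : M ≃ᵢ M => e g⁻¹)
    have : (fun g : M ≃ᵢ M => e g⁻¹) = Prod.swap ∘ e := funext e_inv
    rw [this]
    exact continuous_swap.comp continuous_e

lemma continuous_eval (x : M) : Continuous (fun g : M ≃ᵢ M => g x) := by
  have : (fun g : M ≃ᵢ M => g x) = (fun f : C(M, M) => f x) ∘ (fun g => (e g).1) := rfl
  rw [this]
  exact (ContinuousEvalConst.continuous_eval_const x).comp (continuous_fst.comp continuous_e)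

end IsoGrp
end

namespace IsoGrp
variable (M : Type*) [MetricSpace M] [CompactSpace M] [Nonempty M]

noncomputable instance : MeasurableSpace (M ≃ᵢ M) := borel _
instance : BorelSpace (M ≃ᵢ M) := ⟨rfl⟩

noncomputable def haar : Measure (M ≃ᵢ M) := Measure.haarMeasure ⊤

instance : IsProbabilityMeasure (haar M) := by
  constructor
  have := Measure.haarMeasure_self (K₀ := (⊤ : TopologicalSpace.PositiveCompacts (M ≃ᵢ M)))
  rwa [TopologicalSpace.PositiveCompacts.coe_top] at this

end IsoGrp

theorem exists_isometryGroup_invariant_measure'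
    {M : Type*} [MetricSpace M] [CompactSpace M] [Nonempty M]
    [MeasurableSpace M] [BorelSpace M] :
    ∃ μ : Measure M, IsProbabilityMeasure μ ∧
      (∀ α : M ≃ᵢ M, ∀ B : Set M, MeasurableSet B → μ (α ⁻¹' B) = μ B) ∧
      (∀ α : M ≃ᵢ M, ∀ f : C(M, ℝ), ∫ x, f (α x) ∂μ = ∫ x, f x ∂μ) ∧
      μ.InnerRegularWRT IsCompact MeasurableSet := by
  classical
  set x₀ : M := Classical.arbitrary M
  have hφ : Measurable (fun g : M ≃ᵢ M => g x₀) := (IsoGrp.continuous_eval x₀).measurable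
  set μ : Measure M := (IsoGrp.haar M).map (fun g : M ≃ᵢ M => g x₀) with hμ
  have hprob : IsProbabilityMeasure μ := Measure.isProbabilityMeasure_map hφ.aemeasurable
  have hinv : ∀ α : M ≃ᵢ M, ∀ B : Set M, MeasurableSet B → μ (α ⁻¹' B) = μ B := by
    intro α B hB
    rw [hμ, Measure.map_apply hφ (hB.preimage α.continuous.measurable),
      Measure.map_apply hφ hB]
    have hset : (fun g : M ≃ᵢ M => g x₀) ⁻¹' (α ⁻¹' B) =
        (fun g : M ≃ᵢ M => α * g) ⁻¹' ((fun g : M ≃ᵢ M => g x₀) ⁻¹' B) := rfl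
    haveI : (IsoGrp.haar M).IsMulLeftInvariant := Measure.isMulLeftInvariant_haarMeasure ⊤
    rw [hset, measure_preimage_mul]
  have hmp : ∀ α : M ≃ᵢ M, MeasurePreserving α μ μ := by
    intro α
    refine ⟨α.continuous.measurable, ?_⟩
    ext B hB
    rw [Measure.map_apply α.continuous.measurable hB]
    exact hinv α B hB
  refine ⟨μ, hprob, hinv, fun α f => ?_, ?_⟩
  · exact (hmp α).integral_comp α.toHomeomorph.measurableEmbedding f
  · have h1 : μ.InnerRegularWRT IsCompact IsClosed := Measure.InnerRegularWRT.isCompact_isClosed μ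
    have h2 : μ.InnerRegularWRT IsClosed (fun s => MeasurableSet s ∧ μ s ≠ ⊤) :=
      Measure.WeaklyRegular.innerRegular_measurable
    intro B hB r hr
    exact (h1.trans h2) ⟨hB, measure_ne_top μ B⟩ r hr

/-- **Invariant measure existence theorem** (Theorem 5.2): Every nonempty compact metric space
`M` carries a Borel probability measure `μ` invariant under the isometry group of `M`: for
every surjective isometry `α : M → M` and every Borel set `B` one has `μ (α⁻¹ B) = μ B`
(equivalently, `∫ f ∘ α dμ = ∫ f dμ` for all continuous `f`). Moreover, on a compact metric
space such a measure is automatically Radon (inner regular with respect to compact sets). -/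
theorem exists_isometryGroup_invariant_measure
    {M : Type*} [MetricSpace M] [CompactSpace M] [Nonempty M]
    [MeasurableSpace M] [BorelSpace M] :
    ∃ μ : Measure M, IsProbabilityMeasure μ ∧
      (∀ α : M ≃ᵢ M, ∀ B : Set M, MeasurableSet B → μ (α ⁻¹' B) = μ B) ∧
      (∀ α : M ≃ᵢ M, ∀ f : C(M, ℝ), ∫ x, f (α x) ∂μ = ∫ x, f x ∂μ) ∧
      μ.InnerRegularWRT IsCompact MeasurableSet :=
  exists_isometryGroup_invariant_measure'
end

section
/- Let (M_i, ℬ_i, μ_i), i ∈ I, be measure spaces with μ_i(M_i) ≤ 1 and let 𝒟 be an ultrafilter on I. Let M = ∏_𝒟 M_i be the set-theoretic ultraproduct (the quotient of ∏_i M_i by (x_i) ∼ (y_i) iff { i : x_i = y_i } ∈ 𝒟), and for a family A_i ∈ ℬ_i let [A_i] = { [a_i] ∈ M : { i : a_i ∈ A_i } ∈ 𝒟 }. Then: (1) the collection of ultraboxes [A_i] is a Boolean algebra of subsets of M (containing ∅ and M and closed under finite unions, intersections, and complements); (2) the assignment μ([A_i]) = lim_𝒟 μ_i(A_i) is well defined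 (it depends only on the set [A_i], not on the representing family); and (3) μ is a measure on this Boolean algebra: μ(∅) = 0 and whenever (B_k)_{k∈ℕ} is a sequence of pairwise disjoint ultraboxes whose union is an ultrabox, μ(∪_k B_k) = Σ_k μ(B_k). -/
open MeasureTheory Filter Set
open scoped ENNReal Topology

/-- The equivalence relation of the set-theoretic ultraproduct: two families are identified
when they agree on a set in the ultrafilter `𝒟`. -/
def ultraSetoid {I : Type*} (𝒟 : Ultrafilter I) (M : I → Type*) : Setoid (∀ i, M i) where
  r x y := {i | x i = y i} ∈ 𝒟
  iseqv := by
    refine ⟨fun x => ?_, fun {x y} h => ?_, fun {x y z} hxy hyz => ?_⟩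
    · exact Filter.mem_of_superset Filter.univ_mem fun i _ => rfl
    · exact Filter.mem_of_superset h fun i hi => (hi : _ = _).symm
    · exact Filter.mem_of_superset (Filter.inter_mem hxy hyz)
        fun i hi => (hi.1 : _ = _).trans hi.2

/-- The set-theoretic ultraproduct `∏_𝒟 M_i`: the quotient of `∏_i M_i` by the relation
`(x_i) ∼ (y_i)` iff `{i : x_i = y_i} ∈ 𝒟`. -/
def UProd {I : Type*} (𝒟 : Ultrafilter I) (M : I → Type*) : Type _ :=
  Quotient (ultraSetoid 𝒟 M)

/-- The ultrabox `[A_i] = {[a_i] : {i : a_i ∈ A_i} ∈ 𝒟}` determined by a family of sets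
`A_i ⊆ M_i`. -/
def ultrabox {I : Type*} (𝒟 : Ultrafilter I) (M : I → Type*) (A : ∀ i, Set (M i)) :
    Set (UProd 𝒟 M) :=
  Quotient.mk (ultraSetoid 𝒟 M) '' {a | {i | a i ∈ A i} ∈ 𝒟}

/-- The collection of ultraboxes of families of measurable sets. -/
def ultraboxes {I : Type*} (𝒟 : Ultrafilter I) (M : I → Type*)
    [∀ i, MeasurableSpace (M i)] : Set (Set (UProd 𝒟 M)) :=
  {S | ∃ A : ∀ i, Set (M i), (∀ i, MeasurableSet (A i)) ∧ S = ultrabox 𝒟 M A}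

/-
Ultraboxes commute with the finite Boolean operations, and, all `M i` being nonempty,
`[A_i] ⊆ [B_i]` iff `A_i ⊆ B_i` for `𝒟`-almost all `i`. This gives the Boolean algebra, the
well-definedness of `μ`, and its finite additivity. As `μ` is bounded, σ-additivity on a ring
of sets reduces to continuity at `∅`. If `[E_n]` decreases while `lim_𝒟 μ_i(E_n i) > δ > 0`
for all `n`, choose `a_i` in `E_n i` for the largest `n` with `μ_i(E_n i) > δ`, or in
`⋂_n E_n i` when there is no largest one (this intersection has measure `≥ δ` by continuity
from above of `μ_i`). Then `[a_i]` lies in every `[E_n]`, so `⋂_n [E_n] ≠ ∅`.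
-/

section UltrafilterLimit

variable {I X : Type*} (𝒟 : Ultrafilter I) [TopologicalSpace X] [CompactSpace X] [Nonempty X]

theorem tendsto_limUnder_ultrafilter (f : I → X) :
    Tendsto f 𝒟 (𝓝 (limUnder (𝒟 : Filter I) f)) :=
  tendsto_nhds_limUnder ⟨_, (𝒟.map f).le_nhds_lim⟩

theorem limUnder_ultrafilter_congr [T2Space X] {f g : I → X}
    (h : ∀ᶠ i in 𝒟, f i = g i) : limUnder (𝒟 : Filter I) f = limUnder (𝒟 : Filter I) g :=
  ((tendsto_limUnder_ultrafilter 𝒟 g).congr' (EventuallyEq.symm h)).limUnder_eq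

end UltrafilterLimit

theorem exists_forall_mem_of_antitone {α : Type*} [Nonempty α] {E : ℕ → Set α} {p : ℕ → Prop}
    (hE : Antitone E) (hp : Antitone p) (hne : ∀ n, p n → (E n).Nonempty)
    (hinter : (∀ n, p n) → (⋂ n, E n).Nonempty) : ∃ a, ∀ n, p n → a ∈ E n := by
  by_cases hall : ∀ n, p n
  · obtain ⟨a, ha⟩ := hinter hall
    exact ⟨a, fun n _ => mem_iInter.1 ha n⟩
  push Not at hall
  classical
  obtain ⟨N, hN, hmin⟩ : ∃ N, ¬ p N ∧ ∀ m < N, p m :=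
    ⟨Nat.find hall, Nat.find_spec hall, fun m hm => not_not.1 (Nat.find_min hall hm)⟩
  cases N with
  | zero => exact ⟨Classical.arbitrary α, fun n hn => absurd (hp (Nat.zero_le n) hn) hN⟩
  | succ k =>
    obtain ⟨a, ha⟩ := hne k (hmin k k.lt_succ_self)
    refine ⟨a, fun n hn => hE ?_ ha⟩
    by_contra! hkn
    exact hN (hp hkn hn)

section Ultrabox

variable {I : Type*} (𝒟 : Ultrafilter I) {M : I → Type*}

def UProd.mk (a : ∀ i, M i) : UProd 𝒟 M := Quotient.mk (ultraSetoid 𝒟 M) a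

theorem UProd.mk_surjective : Function.Surjective (UProd.mk 𝒟 : (∀ i, M i) → UProd 𝒟 M) :=
  Quotient.mk_surjective

theorem mem_ultrabox_mk {A : ∀ i, Set (M i)} {a : ∀ i, M i} :
    UProd.mk 𝒟 a ∈ ultrabox 𝒟 M A ↔ ∀ᶠ i in 𝒟, a i ∈ A i := by
  refine ⟨?_, fun h => ⟨a, h, rfl⟩⟩
  rintro ⟨b, hb, hba⟩
  filter_upwards [hb, Quotient.exact hba] with i hbi hab
  exact hab ▸ hbi

theorem ultrabox_ext {S T : Set (UProd 𝒟 M)} (h : ∀ a, UProd.mk 𝒟 a ∈ S ↔ UProd.mk 𝒟 a ∈ T) :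
    S = T :=
  Set.ext ((UProd.mk_surjective 𝒟).forall.2 h)

theorem ultrabox_empty : ultrabox 𝒟 M (fun _ => ∅) = ∅ :=
  ultrabox_ext 𝒟 fun a => by simp [mem_ultrabox_mk, 𝒟.neBot.ne]

theorem ultrabox_univ : ultrabox 𝒟 M (fun _ => univ) = univ :=
  ultrabox_ext 𝒟 fun a => by simp [mem_ultrabox_mk]

theorem ultrabox_union (A B : ∀ i, Set (M i)) :
    ultrabox 𝒟 M (fun i => A i ∪ B i) = ultrabox 𝒟 M A ∪ ultrabox 𝒟 M B :=
  ultrabox_ext 𝒟 fun a => by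
    simp only [mem_union, mem_ultrabox_mk]
    exact Ultrafilter.eventually_or

theorem ultrabox_inter (A B : ∀ i, Set (M i)) :
    ultrabox 𝒟 M (fun i => A i ∩ B i) = ultrabox 𝒟 M A ∩ ultrabox 𝒟 M B :=
  ultrabox_ext 𝒟 fun a => by
    simp only [mem_inter_iff, mem_ultrabox_mk]
    exact eventually_and

theorem ultrabox_compl (A : ∀ i, Set (M i)) :
    ultrabox 𝒟 M (fun i => (A i)ᶜ) = (ultrabox 𝒟 M A)ᶜ :=
  ultrabox_ext 𝒟 fun a => by
    simp only [mem_compl_iff, mem_ultrabox_mk]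
    exact Ultrafilter.eventually_not

theorem ultrabox_sdiff (A B : ∀ i, Set (M i)) :
    ultrabox 𝒟 M (fun i => A i \ B i) = ultrabox 𝒟 M A \ ultrabox 𝒟 M B := by
  rw [Set.sdiff_eq, ← ultrabox_compl, ← ultrabox_inter]
  rfl

theorem ultrabox_biInter_finset {κ : Type*} (s : Finset κ) (A : κ → ∀ i, Set (M i)) :
    ultrabox 𝒟 M (fun i => ⋂ k ∈ s, A k i) = ⋂ k ∈ s, ultrabox 𝒟 M (A k) := by
  classical
  induction s using Finset.induction_on with
  | empty => simpa using ultrabox_univ 𝒟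
  | insert k s _ ih => simp only [Finset.set_biInter_insert, ultrabox_inter, ih]

variable [∀ i, Nonempty (M i)]

theorem ultrabox_eq_empty_iff {A : ∀ i, Set (M i)} :
    ultrabox 𝒟 M A = ∅ ↔ ∀ᶠ i in 𝒟, A i = ∅ := by
  refine ⟨fun h => ?_, fun h => ?_⟩
  · by_contra hne
    simp only [← Ultrafilter.eventually_not, ← nonempty_iff_ne_empty] at hne
    classical
    let a : ∀ i, M i := fun i => if hi : (A i).Nonempty then hi.some else Classical.arbitrary _
    have ha : UProd.mk 𝒟 a ∈ ultrabox 𝒟 M A := by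
      rw [mem_ultrabox_mk]
      filter_upwards [hne] with i hi
      simpa only [a, dif_pos hi] using hi.some_mem
    simp [h] at ha
  · rw [← ultrabox_empty 𝒟]
    exact ultrabox_ext 𝒟 fun a => by
      simp only [mem_ultrabox_mk]
      exact eventually_congr (h.mono fun i hi => by simp [hi])

theorem ultrabox_subset_iff {A B : ∀ i, Set (M i)} :
    ultrabox 𝒟 M A ⊆ ultrabox 𝒟 M B ↔ ∀ᶠ i in 𝒟, A i ⊆ B i := by
  simp only [← sdiff_eq_empty, ← ultrabox_sdiff, ultrabox_eq_empty_iff]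

theorem ultrabox_eq_iff {A B : ∀ i, Set (M i)} :
    ultrabox 𝒟 M A = ultrabox 𝒟 M B ↔ ∀ᶠ i in 𝒟, A i = B i := by
  simp only [Subset.antisymm_iff, ultrabox_subset_iff, eventually_and]

theorem disjoint_ultrabox_iff {A B : ∀ i, Set (M i)} :
    Disjoint (ultrabox 𝒟 M A) (ultrabox 𝒟 M B) ↔ ∀ᶠ i in 𝒟, Disjoint (A i) (B i) := by
  simp only [disjoint_iff_inter_eq_empty, ← ultrabox_inter, ultrabox_eq_empty_iff]

end Ultrabox

section Premeasure

variable {I : Type*} (𝒟 : Ultrafilter I) {M : I → Type*} [∀ i, MeasurableSpace (M i)]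

theorem isSetAlgebra_ultraboxes : IsSetAlgebra (ultraboxes 𝒟 M) where
  empty_mem := ⟨fun _ => ∅, fun _ => .empty, (ultrabox_empty 𝒟).symm⟩
  compl_mem := by
    rintro _ ⟨A, hA, rfl⟩
    exact ⟨fun i => (A i)ᶜ, fun i => (hA i).compl, (ultrabox_compl 𝒟 A).symm⟩
  union_mem := by
    rintro _ _ ⟨A, hA, rfl⟩ ⟨B, hB, rfl⟩
    exact ⟨fun i => A i ∪ B i, fun i => (hA i).union (hB i), (ultrabox_union 𝒟 A B).symm⟩

variable (μ : ∀ i, Measure (M i))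

open Classical in
noncomputable def ultraboxMeasure (S : Set (UProd 𝒟 M)) : ℝ≥0∞ :=
  if h : S ∈ ultraboxes 𝒟 M then limUnder (𝒟 : Filter I) (fun i => μ i (h.choose i)) else 0

theorem ultraboxMeasure_le {c : ℝ≥0∞} (hμ : ∀ i, μ i univ ≤ c) (S : Set (UProd 𝒟 M)) :
    ultraboxMeasure 𝒟 μ S ≤ c := by
  unfold ultraboxMeasure
  split_ifs
  · exact le_of_tendsto' (tendsto_limUnder_ultrafilter 𝒟 _)
      fun i => (measure_mono (subset_univ _)).trans (hμ i)
  · exact zero_le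

variable [∀ i, Nonempty (M i)]

theorem ultraboxMeasure_ultrabox {A : ∀ i, Set (M i)} (hA : ∀ i, MeasurableSet (A i)) :
    ultraboxMeasure 𝒟 μ (ultrabox 𝒟 M A) = limUnder (𝒟 : Filter I) fun i => μ i (A i) := by
  have h : ultrabox 𝒟 M A ∈ ultraboxes 𝒟 M := ⟨A, hA, rfl⟩
  rw [ultraboxMeasure, dif_pos h]
  refine limUnder_ultrafilter_congr 𝒟 ?_
  filter_upwards [(ultrabox_eq_iff 𝒟).1 h.choose_spec.2] with i hi
  rw [← hi]

theorem ultraboxMeasure_empty : ultraboxMeasure 𝒟 μ ∅ = 0 := by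
  rw [← ultrabox_empty 𝒟, ultraboxMeasure_ultrabox 𝒟 μ fun _ => .empty]
  simpa only [measure_empty] using tendsto_const_nhds.limUnder_eq

theorem ultraboxMeasure_union {S T : Set (UProd 𝒟 M)} (hS : S ∈ ultraboxes 𝒟 M)
    (hT : T ∈ ultraboxes 𝒟 M) (hST : Disjoint S T) :
    ultraboxMeasure 𝒟 μ (S ∪ T) = ultraboxMeasure 𝒟 μ S + ultraboxMeasure 𝒟 μ T := by
  obtain ⟨A, hA, rfl⟩ := hS
  obtain ⟨B, hB, rfl⟩ := hT
  rw [← ultrabox_union, ultraboxMeasure_ultrabox 𝒟 μ fun i => (hA i).union (hB i),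
    ultraboxMeasure_ultrabox 𝒟 μ hA, ultraboxMeasure_ultrabox 𝒟 μ hB,
    ← ((tendsto_limUnder_ultrafilter 𝒟 _).add (tendsto_limUnder_ultrafilter 𝒟 _)).limUnder_eq]
  refine limUnder_ultrafilter_congr 𝒟 ?_
  filter_upwards [(disjoint_ultrabox_iff 𝒟).1 hST] with i hi using measure_union hi (hB i)

noncomputable def ultraboxContent : AddContent ℝ≥0∞ (ultraboxes 𝒟 M) :=
  (isSetAlgebra_ultraboxes 𝒟).isSetRing.addContent_of_union (ultraboxMeasure 𝒟 μ)
    (ultraboxMeasure_empty 𝒟 μ) (ultraboxMeasure_union 𝒟 μ)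

theorem ultraboxContent_apply (S : Set (UProd 𝒟 M)) :
    ultraboxContent 𝒟 μ S = ultraboxMeasure 𝒟 μ S :=
  rfl

variable [∀ i, IsFiniteMeasure (μ i)]

theorem tendsto_limUnder_measure_zero_of_iInter_ultrabox_eq_empty {E : ℕ → ∀ i, Set (M i)}
    (hEm : ∀ n i, MeasurableSet (E n i)) (hE : ∀ i, Antitone fun n => E n i)
    (h : ⋂ n, ultrabox 𝒟 M (E n) = ∅) :
    Tendsto (fun n => limUnder (𝒟 : Filter I) fun i => μ i (E n i)) atTop (𝓝 0) := by
  have hanti : Antitone fun n => limUnder (𝒟 : Filter I) fun i => μ i (E n i) :=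
    fun m n hmn => le_of_tendsto_of_tendsto' (tendsto_limUnder_ultrafilter 𝒟 _)
      (tendsto_limUnder_ultrafilter 𝒟 _) fun i => measure_mono (hE i hmn)
  suffices hinf : ⨅ n, limUnder (𝒟 : Filter I) (fun i => μ i (E n i)) = 0 by
    simpa only [hinf] using tendsto_atTop_iInf hanti
  by_contra hne
  obtain ⟨δ, hδ0, hδ⟩ := exists_between (pos_iff_ne_zero.2 hne)
  have hev : ∀ n, ∀ᶠ i in 𝒟, δ < μ i (E n i) := fun n =>
    (tendsto_limUnder_ultrafilter 𝒟 _).eventually_const_lt (hδ.trans_le (iInf_le _ n))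
  have hpt : ∀ i, ∃ a, ∀ n, δ < μ i (E n i) → a ∈ E n i := by
    intro i
    refine exists_forall_mem_of_antitone (hE i)
      (fun m n hmn h => h.trans_le (measure_mono (hE i hmn)))
      (fun n h => nonempty_of_measure_ne_zero (hδ0.trans h).ne') fun h => ?_
    refine nonempty_of_measure_ne_zero (μ := μ i) ?_
    rw [(hE i).measure_iInter (fun n => (hEm n i).nullMeasurableSet) ⟨0, measure_ne_top _ _⟩]
    exact (hδ0.trans_le (le_iInf fun n => (h n).le)).ne'
  choose a ha using hpt
  have hmem : UProd.mk 𝒟 a ∈ ⋂ n, ultrabox 𝒟 M (E n) :=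
    mem_iInter.2 fun n => (mem_ultrabox_mk 𝒟).2 ((hev n).mono fun i hi => ha i n hi)
  simp [h] at hmem

theorem tendsto_ultraboxContent_zero ⦃s : ℕ → Set (UProd 𝒟 M)⦄ (hs : ∀ n, s n ∈ ultraboxes 𝒟 M)
    (hanti : Antitone s) (hempty : ⋂ n, s n = ∅) :
    Tendsto (fun n => ultraboxContent 𝒟 μ (s n)) atTop (𝓝 0) := by
  choose A hA hsA using hs
  let E : ℕ → ∀ i, Set (M i) := fun n i => ⋂ k ∈ Finset.range (n + 1), A k i
  have hEm : ∀ n i, MeasurableSet (E n i) := fun n i =>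
    Finset.measurableSet_biInter _ fun k _ => hA k i
  have hEs : ∀ n, ultrabox 𝒟 M (E n) = s n := by
    intro n
    simp only [E, ultrabox_biInter_finset, ← hsA]
    exact (biInter_subset_of_mem (Finset.self_mem_range_succ n)).antisymm
      (subset_iInter₂ fun k hk => hanti (Nat.lt_succ_iff.1 (Finset.mem_range.1 hk)))
  have hEanti : ∀ i, Antitone fun n => E n i := fun i m n hmn =>
    biInter_subset_biInter_left (Finset.range_subset_range.2 (Nat.succ_le_succ hmn))
  have := tendsto_limUnder_measure_zero_of_iInter_ultrabox_eq_empty 𝒟 μ hEm hEanti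
    (by simpa only [hEs] using hempty)
  simpa only [← hEs, ultraboxContent_apply, ultraboxMeasure_ultrabox 𝒟 μ (hEm _)] using this

end Premeasure

/-- Lemma 3.3 (together with the surrounding discussion): given measure spaces
`(M_i, ℬ_i, μ_i)` with `μ_i(M_i) ≤ 1` and an ultrafilter `𝒟` on `I`, on the set-theoretic
ultraproduct `M = ∏_𝒟 M_i`:
(1) the ultraboxes form a Boolean algebra of subsets of `M`;
(2) `μ([A_i]) = lim_𝒟 μ_i(A_i)` is well defined (depends only on the ultrabox); and
(3) `μ` is a measure on this Boolean algebra: it vanishes on `∅` and is countably additive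
on disjoint sequences of ultraboxes whose union is again an ultrabox.
Here `limUnder (𝒟 : Filter I) (fun i => μ i (A i))` is the `𝒟`-limit of the family of
measures of the `A_i` (computed in `ℝ≥0∞`, where ultrafilter limits always exist, as the
first clause records). -/
theorem ultraproduct_premeasure
    {I : Type*} (𝒟 : Ultrafilter I) (M : I → Type*) [∀ i, Nonempty (M i)]
    [∀ i, MeasurableSpace (M i)] (μ : ∀ i, Measure (M i))
    (hμ : ∀ i, μ i Set.univ ≤ 1) :
    -- `𝒟`-limits of the measures exist (so `limUnder` below is the genuine limit)
    (∀ A : ∀ i, Set (M i),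
      Tendsto (fun i => μ i (A i)) (𝒟 : Filter I)
        (𝓝 (limUnder (𝒟 : Filter I) fun i => μ i (A i)))) ∧
    -- (1) the ultraboxes form a Boolean algebra of subsets of `M`
    (∅ ∈ ultraboxes 𝒟 M) ∧
    (Set.univ ∈ ultraboxes 𝒟 M) ∧
    (∀ S T, S ∈ ultraboxes 𝒟 M → T ∈ ultraboxes 𝒟 M → S ∪ T ∈ ultraboxes 𝒟 M) ∧
    (∀ S T, S ∈ ultraboxes 𝒟 M → T ∈ ultraboxes 𝒟 M → S ∩ T ∈ ultraboxes 𝒟 M) ∧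
    (∀ S, S ∈ ultraboxes 𝒟 M → Sᶜ ∈ ultraboxes 𝒟 M) ∧
    -- (2) `μ([A_i]) = lim_𝒟 μ_i(A_i)` is well defined
    (∀ A B : ∀ i, Set (M i), (∀ i, MeasurableSet (A i)) → (∀ i, MeasurableSet (B i)) →
      ultrabox 𝒟 M A = ultrabox 𝒟 M B →
      limUnder (𝒟 : Filter I) (fun i => μ i (A i)) =
        limUnder (𝒟 : Filter I) (fun i => μ i (B i))) ∧
    -- (3) `μ` is a measure on the Boolean algebra of ultraboxes: `μ ∅ = 0` ...
    (∀ A : ∀ i, Set (M i), (∀ i, MeasurableSet (A i)) → ultrabox 𝒟 M A = (∅ : Set (UProd 𝒟 M)) →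
      limUnder (𝒟 : Filter I) (fun i => μ i (A i)) = 0) ∧
    -- ... and countable additivity
    (∀ (A : ℕ → ∀ i, Set (M i)) (B : ∀ i, Set (M i)),
      (∀ k i, MeasurableSet (A k i)) → (∀ i, MeasurableSet (B i)) →
      (Pairwise fun k l => Disjoint (ultrabox 𝒟 M (A k)) (ultrabox 𝒟 M (A l))) →
      (⋃ k, ultrabox 𝒟 M (A k)) = ultrabox 𝒟 M B →
      limUnder (𝒟 : Filter I) (fun i => μ i (B i)) =
        ∑' k, limUnder (𝒟 : Filter I) (fun i => μ i (A k i))) := by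
  have : ∀ i, IsFiniteMeasure (μ i) := fun i => ⟨(hμ i).trans_lt ENNReal.one_lt_top⟩
  have hAlg := isSetAlgebra_ultraboxes 𝒟 (M := M)
  refine ⟨fun A => tendsto_limUnder_ultrafilter 𝒟 _, hAlg.empty_mem, hAlg.univ_mem,
    fun _ _ hS hT => hAlg.union_mem hS hT, fun _ _ => hAlg.inter_mem,
    fun _ hS => hAlg.compl_mem hS, ?_, ?_, ?_⟩
  · intro A B hA hB hAB
    rw [← ultraboxMeasure_ultrabox 𝒟 μ hA, hAB, ultraboxMeasure_ultrabox 𝒟 μ hB]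
  · intro A hA h
    rw [← ultraboxMeasure_ultrabox 𝒟 μ hA, h, ultraboxMeasure_empty]
  · intro A B hA hB hdisj hU
    have hfin : ∀ S ∈ ultraboxes 𝒟 M, ultraboxContent 𝒟 μ S ≠ ∞ := fun S _ =>
      ((ultraboxMeasure_le 𝒟 μ hμ S).trans_lt ENNReal.one_lt_top).ne
    have hsum := addContent_iUnion_eq_sum_of_tendsto_zero hAlg.isSetRing (ultraboxContent 𝒟 μ)
      hfin (tendsto_ultraboxContent_zero 𝒟 μ) (fun k => ⟨A k, hA k, rfl⟩)
      (hU ▸ ⟨B, hB, rfl⟩) hdisj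
    simpa only [hU, ultraboxContent_apply, ultraboxMeasure_ultrabox 𝒟 μ (hA _),
      ultraboxMeasure_ultrabox 𝒟 μ hB] using hsum
end

section
/- Let (M_i, ℬ_i, μ_i), i ∈ I, be measure spaces with μ_i(M_i) ≤ 1, let 𝒟 be an ultrafilter on I, let M = ∏_𝒟 M_i be the set-theoretic ultraproduct, and let μ be the Carathéodory extension to the σ-algebra generated by the ultraboxes of the premeasure defined on ultraboxes by μ([A_i]) = lim_𝒟 μ_i(A_i). For each i let f_i : M_i → ℝ be measurable with |f_i| ≤ β for a fixed β ≥ 0. Then the function f : M → ℝ given by f([a_i]) = lim_𝒟 f_i(a_i) is well defined and measurable with respect to the σ-algebra generated by the ultraboxes, and ∫_M f dμ = lim_𝒟 ∫_{M_i} f_i dμ_i. -/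
open MeasureTheory Filter Set
open scoped ENNReal Topology

/-!
The ultralimit `g [a] = lim_𝒟 f_i (a_i)` exists by compactness of `[-β, β]`. For every set
`E ⊆ ℝ` the ultrabox `[f_i⁻¹ E]` lies between `g⁻¹ (interior E)` and `g⁻¹ (closure E)`, so
`ν (g⁻¹ E) = lim_𝒟 μ_i (f_i⁻¹ E)` as soon as `g⁻¹ (frontier E)` is `ν`-null; with `E = (c, ∞)`
the same squeeze shows that `g` is measurable.

Dominated convergence is not available along an ultrafilter, so the integrals are compared
through a uniform approximation instead: `g` has only countably many atoms, hence some grid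
`s + δℤ` avoids them all. Rounding down to that grid moves every function by at most `δ`, and
the integrals of the rounded functions are finite sums of measures of preimages of grid cells,
which converge by the previous paragraph.
-/

theorem tendsto_of_forall_approx {ι α : Type*} [PseudoMetricSpace α] {L : Filter ι} {x : ι → α}
    {y : α} (h : ∀ ε > 0, ∃ (x' : ι → α) (y' : α), Tendsto x' L (𝓝 y') ∧
      (∀ᶠ i in L, dist (x i) (x' i) ≤ ε) ∧ dist y' y ≤ ε) :
    Tendsto x L (𝓝 y) := by
  refine Metric.tendsto_nhds.2 fun ε hε => ?_
  obtain ⟨x', y', hx', hxx', hyy'⟩ := h (ε / 3) (by positivity)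
  filter_upwards [hxx', Metric.tendsto_nhds.1 hx' (ε / 3) (by positivity)] with i hi hi'
  calc dist (x i) y ≤ dist (x i) (x' i) + dist (x' i) y' + dist y' y := dist_triangle4 _ _ _ _
    _ < ε := by linarith

noncomputable def floorToGrid (s δ t : ℝ) : ℝ := s + ⌊(t - s) / δ⌋ * δ

section floorToGrid

variable {s δ : ℝ}

theorem mem_Ico_grid_iff (hδ : 0 < δ) {t : ℝ} {k : ℤ} :
    t ∈ Ico (s + k * δ) (s + (k + 1) * δ) ↔ ⌊(t - s) / δ⌋ = k := by
  rw [Int.floor_eq_iff, le_div_iff₀ hδ, div_lt_iff₀ hδ, mem_Ico]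
  constructor <;> rintro ⟨h₁, h₂⟩ <;> constructor <;> linarith

theorem abs_sub_floorToGrid_le (hδ : 0 < δ) (t : ℝ) : |t - floorToGrid s δ t| ≤ δ := by
  have h := (mem_Ico_grid_iff (s := s) hδ).2 (rfl : ⌊(t - s) / δ⌋ = _)
  rw [floorToGrid, abs_le]
  constructor <;> linarith [h.1, h.2]

theorem measurable_floorToGrid : Measurable (floorToGrid s δ) := by
  unfold floorToGrid; fun_prop

theorem floorToGrid_eq_sum_indicator (hδ : 0 < δ) {t : ℝ} {K : Finset ℤ}
    (ht : ⌊(t - s) / δ⌋ ∈ K) :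
    floorToGrid s δ t =
      ∑ k ∈ K, (Ico (s + k * δ) (s + (k + 1) * δ)).indicator (fun _ => s + k * δ) t := by
  simp only [indicator_apply, mem_Ico_grid_iff hδ, Finset.sum_ite_eq, if_pos ht, floorToGrid]

theorem integral_floorToGrid_comp {Ω : Type*} [MeasurableSpace Ω] {m : Measure Ω}
    [IsFiniteMeasure m] (hδ : 0 < δ) {h : Ω → ℝ} (hh : Measurable h) {K : Finset ℤ}
    (hK : ∀ x, ⌊(h x - s) / δ⌋ ∈ K) :
    ∫ x, floorToGrid s δ (h x) ∂m =
      ∑ k ∈ K, m.real (h ⁻¹' Ico (s + k * δ) (s + (k + 1) * δ)) * (s + k * δ) := by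
  simp_rw [floorToGrid_eq_sum_indicator hδ (hK _), ← indicator_comp_right]
  rw [integral_finsetSum _ fun k _ =>
    (integrable_const _).indicator (hh measurableSet_Ico)]
  refine Finset.sum_congr rfl fun k _ => ?_
  exact integral_indicator_const _ (hh measurableSet_Ico)

theorem abs_integral_sub_integral_floorToGrid_le {Ω : Type*} [MeasurableSpace Ω]
    {m : Measure Ω} [IsFiniteMeasure m] (hδ : 0 < δ) {h : Ω → ℝ} (hh : Integrable h m) :
    |∫ x, h x ∂m - ∫ x, floorToGrid s δ (h x) ∂m| ≤ δ * m.real univ := by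
  have hσh : Integrable (fun x => h x - floorToGrid s δ (h x)) m :=
    .of_bound ((measurable_id.sub measurable_floorToGrid).comp_aemeasurable
      hh.aemeasurable).aestronglyMeasurable δ
      (.of_forall fun x => abs_sub_floorToGrid_le hδ (h x))
  have hσ : Integrable (fun x => floorToGrid s δ (h x)) m := by
    simpa only [Pi.sub_def, sub_sub_cancel] using hh.sub hσh
  rw [← integral_sub hh hσ, ← Real.norm_eq_abs]
  exact norm_integral_le_of_norm_le_const (.of_forall fun x => abs_sub_floorToGrid_le hδ (h x))

end floorToGrid

theorem exists_forall_measure_preimage_grid_eq_zero {Ω : Type*} [MeasurableSpace Ω]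
    (ν : Measure Ω) [SFinite ν] {g : Ω → ℝ} (hg : Measurable g) (δ : ℝ) :
    ∃ s : ℝ, ∀ k : ℤ, ν (g ⁻¹' {s + k * δ}) = 0 := by
  have hatoms : {t : ℝ | 0 < ν {x | g x = t}}.Countable :=
    Measure.countable_meas_level_set_pos hg
  have hbad : (⋃ k : ℤ, (fun t => t - k * δ) '' {t : ℝ | 0 < ν {x | g x = t}}).Countable :=
    countable_iUnion fun k => hatoms.image _
  obtain ⟨s, hs⟩ := (hbad.dense_compl ℝ).nonempty
  refine ⟨s, fun k => ?_⟩
  by_contra hk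
  exact hs (mem_iUnion.2 ⟨k, s + k * δ, pos_iff_ne_zero.2 hk, add_sub_cancel_right s _⟩)

theorem tendsto_integral_of_tendsto_measureReal_of_null_frontier {ι : Type*} {L : Filter ι}
    {Ω : ι → Type*} [∀ i, MeasurableSpace (Ω i)] {μ : ∀ i, Measure (Ω i)}
    [∀ i, IsFiniteMeasure (μ i)]
    {Ω' : Type*} [MeasurableSpace Ω'] {ν : Measure Ω'} [IsFiniteMeasure ν]
    {f : ∀ i, Ω i → ℝ} {g : Ω' → ℝ} (hf : ∀ i, Measurable (f i)) (hg : Measurable g) {β : ℝ}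
    (hfβ : ∀ i x, |f i x| ≤ β) (hgβ : ∀ x, |g x| ≤ β)
    (hconv : ∀ E, MeasurableSet E → ν (g ⁻¹' frontier E) = 0 →
      Tendsto (fun i => (μ i).real (f i ⁻¹' E)) L (𝓝 (ν.real (g ⁻¹' E)))) :
    Tendsto (fun i => ∫ x, f i x ∂μ i) L (𝓝 (∫ x, g x ∂ν)) := by
  refine tendsto_of_forall_approx fun ε hε => ?_
  set δ := ε / (ν.real univ + 1)
  have hδ : 0 < δ := by positivity
  have hδε : δ * (ν.real univ + 1) ≤ ε := (div_mul_cancel₀ ε (by positivity)).le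
  obtain ⟨s, hs⟩ := exists_forall_measure_preimage_grid_eq_zero ν hg δ
  set K := Finset.Icc ⌊(-β - s) / δ⌋ ⌊(β - s) / δ⌋
  have hK : ∀ t, |t| ≤ β → ⌊(t - s) / δ⌋ ∈ K := fun t ht =>
    Finset.mem_Icc.2 ⟨Int.floor_le_floor (by gcongr; linarith [neg_abs_le t]),
      Int.floor_le_floor (by gcongr; linarith [le_abs_self t])⟩
  have hcell : ∀ k : ℤ,
      Tendsto (fun i => (μ i).real (f i ⁻¹' Ico (s + k * δ) (s + (k + 1) * δ))) L
        (𝓝 (ν.real (g ⁻¹' Ico (s + k * δ) (s + (k + 1) * δ)))) := fun k => by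
    refine hconv _ measurableSet_Ico
      (measure_mono_null ?_ (measure_union_null (hs k) (hs (k + 1))))
    rw [frontier_Ico (by nlinarith), ← preimage_union]
    exact preimage_mono (by push_cast; rfl)
  have hmass : Tendsto (fun i => (μ i).real univ) L (𝓝 (ν.real univ)) := by
    simpa using hconv univ MeasurableSet.univ (by simp)
  refine ⟨fun i => ∫ x, floorToGrid s δ (f i x) ∂μ i, ∫ x, floorToGrid s δ (g x) ∂ν, ?_, ?_, ?_⟩
  · simp_rw [integral_floorToGrid_comp hδ (hf _) fun x => hK _ (hfβ _ x),
      integral_floorToGrid_comp hδ hg fun x => hK _ (hgβ x)]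
    exact tendsto_finsetSum _ fun k _ => (hcell k).mul_const _
  · filter_upwards [hmass.eventually (eventually_lt_nhds (lt_add_one _))] with i hi
    rw [Real.dist_eq]
    refine (abs_integral_sub_integral_floorToGrid_le hδ
      (.of_bound (hf i).aestronglyMeasurable β (.of_forall (hfβ i)))).trans ?_
    exact hδε.trans' (by gcongr)
  · rw [dist_comm, Real.dist_eq]
    refine (abs_integral_sub_integral_floorToGrid_le hδ
      (.of_bound hg.aestronglyMeasurable β (.of_forall hgβ))).trans ?_
    exact hδε.trans' (by gcongr; linarith)

theorem Ultrafilter.tendsto_limUnder_of_isCompact {ι X : Type*} [TopologicalSpace X]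
    [Nonempty X] (𝒟 : Ultrafilter ι) {u : ι → X} {K : Set X} (hK : IsCompact K)
    (hu : ∀ i, u i ∈ K) :
    Tendsto u 𝒟 (𝓝 (limUnder 𝒟 u)) := by
  obtain ⟨x, -, hx⟩ := hK.ultrafilter_le_nhds (𝒟.map u)
    (le_principal_iff.2 (Ultrafilter.mem_map.2 (univ_mem' hu)))
  exact tendsto_nhds_limUnder ⟨x, hx⟩

namespace UProd

variable {I : Type*} {𝒟 : Ultrafilter I} {M : I → Type*}

theorem mk_mem_ultrabox {A : ∀ i, Set (M i)} {a : ∀ i, M i} :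
    Quotient.mk (ultraSetoid 𝒟 M) a ∈ ultrabox 𝒟 M A ↔ {i | a i ∈ A i} ∈ 𝒟 := by
  refine ⟨?_, fun h => ⟨a, h, rfl⟩⟩
  rintro ⟨b, hb, hba⟩
  filter_upwards [Quotient.exact hba, hb] with i (hi : b i = a i) hbi
  exact hi ▸ hbi

theorem ultrabox_univ : ultrabox 𝒟 M (fun _ => univ) = univ :=
  eq_univ_of_forall fun x => Quotient.inductionOn x fun _ => mk_mem_ultrabox.2 univ_mem

theorem ultrabox_mono {A B : ∀ i, Set (M i)} (h : ∀ i, A i ⊆ B i) :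
    ultrabox 𝒟 M A ⊆ ultrabox 𝒟 M B :=
  image_mono fun _ ha => mem_of_superset ha fun i => @h i _

variable (𝒟) in
noncomputable def ultralimit {X : Type*} [TopologicalSpace X] [Nonempty X] (f : ∀ i, M i → X) :
    UProd 𝒟 M → X :=
  Quotient.lift (fun a => limUnder (𝒟 : Filter I) fun i => f i (a i))
    fun a b hab => congrArg lim <| map_congr <|
      mem_of_superset (hab : {i | a i = b i} ∈ 𝒟) fun i hi => congrArg (f i) hi

theorem tendsto_ultralimit {X : Type*} [TopologicalSpace X] [Nonempty X] {f : ∀ i, M i → X}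
    {K : Set X} (hK : IsCompact K) (hfK : ∀ i x, f i x ∈ K) (a : ∀ i, M i) :
    Tendsto (fun i => f i (a i)) 𝒟 (𝓝 (ultralimit 𝒟 f (Quotient.mk _ a))) :=
  𝒟.tendsto_limUnder_of_isCompact hK fun i => hfK i (a i)

section Limit

variable {X : Type*} [TopologicalSpace X] {f : ∀ i, M i → X} {g : UProd 𝒟 M → X}

theorem preimage_subset_ultrabox_of_isOpen
    (hg : ∀ a, Tendsto (fun i => f i (a i)) 𝒟 (𝓝 (g (Quotient.mk _ a))))
    {U : Set X} (hU : IsOpen U) :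
    g ⁻¹' U ⊆ ultrabox 𝒟 M fun i => f i ⁻¹' U := fun x =>
  Quotient.inductionOn x fun a ha => mk_mem_ultrabox.2 <| hg a (hU.mem_nhds ha)

theorem ultrabox_subset_preimage_of_isClosed
    (hg : ∀ a, Tendsto (fun i => f i (a i)) 𝒟 (𝓝 (g (Quotient.mk _ a))))
    {F : Set X} (hF : IsClosed F) :
    (ultrabox 𝒟 M fun i => f i ⁻¹' F) ⊆ g ⁻¹' F := fun x =>
  Quotient.inductionOn x fun a ha => hF.mem_of_tendsto (hg a) (mk_mem_ultrabox.1 ha :)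

theorem measure_ultrabox_eq_of_null_frontier
    (hg : ∀ a, Tendsto (fun i => f i (a i)) 𝒟 (𝓝 (g (Quotient.mk _ a))))
    [MeasurableSpace (UProd 𝒟 M)] (ν : Measure (UProd 𝒟 M)) {E : Set X}
    (hE : ν (g ⁻¹' frontier E) = 0) :
    ν (ultrabox 𝒟 M fun i => f i ⁻¹' E) = ν (g ⁻¹' E) := by
  have hint : g ⁻¹' interior E ⊆ ultrabox 𝒟 M fun i => f i ⁻¹' E :=
    (preimage_subset_ultrabox_of_isOpen hg isOpen_interior).trans
      (ultrabox_mono fun i => preimage_mono interior_subset)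
  have hcl : (ultrabox 𝒟 M fun i => f i ⁻¹' E) ⊆ g ⁻¹' closure E :=
    (ultrabox_mono fun i => preimage_mono subset_closure).trans
      (ultrabox_subset_preimage_of_isClosed hg isClosed_closure)
  have hcl_int : ν (g ⁻¹' closure E) ≤ ν (g ⁻¹' interior E) := by
    calc ν (g ⁻¹' closure E) ≤ ν (g ⁻¹' interior E) + ν (g ⁻¹' frontier E) := by
          rw [closure_eq_interior_union_frontier, preimage_union]; exact measure_union_le _ _
      _ = ν (g ⁻¹' interior E) := by rw [hE, add_zero]
  apply le_antisymm
  · exact (measure_mono hcl).trans (hcl_int.trans (measure_mono (preimage_mono interior_subset)))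
  · exact (measure_mono (preimage_mono subset_closure)).trans (hcl_int.trans (measure_mono hint))

end Limit

theorem measurable_of_tendsto [∀ i, MeasurableSpace (M i)] {f : ∀ i, M i → ℝ}
    {g : UProd 𝒟 M → ℝ} (hg : ∀ a, Tendsto (fun i => f i (a i)) 𝒟 (𝓝 (g (Quotient.mk _ a))))
    (hf : ∀ i, Measurable (f i)) :
    Measurable[MeasurableSpace.generateFrom (ultraboxes 𝒟 M)] g := by
  refine measurable_of_Ioi fun c => ?_
  have hIoi :
      g ⁻¹' Ioi c = ⋃ (q : ℚ) (_ : c < q), ultrabox 𝒟 M fun i => f i ⁻¹' Ioi (q : ℝ) := by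
    ext x
    simp only [mem_preimage, mem_Ioi, mem_iUnion, exists_prop]
    constructor
    · intro hx
      obtain ⟨q, hcq, hqx⟩ := exists_rat_btwn hx
      exact ⟨q, hcq, preimage_subset_ultrabox_of_isOpen hg isOpen_Ioi hqx⟩
    · rintro ⟨q, hcq, hx⟩
      have hqx : (q : ℝ) ≤ g x := ultrabox_subset_preimage_of_isClosed hg isClosed_Ici
        (ultrabox_mono (fun i => preimage_mono Ioi_subset_Ici_self) hx)
      exact hcq.trans_le hqx
  rw [hIoi]
  exact .iUnion fun q => .iUnion fun _ =>
    MeasurableSpace.measurableSet_generateFrom ⟨_, fun i => hf i measurableSet_Ioi, rfl⟩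

end UProd

theorem ultraproduct_integral_limit_general
    {I : Type*} (𝒟 : Ultrafilter I) (M : I → Type*)
    [∀ i, MeasurableSpace (M i)] (μ : ∀ i, Measure (M i))
    (hμ : ∀ i, μ i Set.univ ≤ 1)
    (ν : @Measure (UProd 𝒟 M) (MeasurableSpace.generateFrom (ultraboxes 𝒟 M)))
    (hν : ∀ A : ∀ i, Set (M i), (∀ i, MeasurableSet (A i)) →
      ν (ultrabox 𝒟 M A) = limUnder (𝒟 : Filter I) fun i => μ i (A i))
    (β : ℝ)
    (f : ∀ i, M i → ℝ) (hf : ∀ i, Measurable (f i)) (hbd : ∀ i x, |f i x| ≤ β) :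
    ∃ g : UProd 𝒟 M → ℝ,
      -- `g` is well defined: its value on any class is the `𝒟`-limit over representatives
      (∀ a : ∀ i, M i,
        Tendsto (fun i => f i (a i)) (𝒟 : Filter I)
          (𝓝 (g (Quotient.mk (ultraSetoid 𝒟 M) a)))) ∧
      -- `g` is measurable with respect to the σ-algebra generated by the ultraboxes
      Measurable[MeasurableSpace.generateFrom (ultraboxes 𝒟 M)] g ∧
      -- `∫_M g dν = lim_𝒟 ∫_{M_i} f_i dμ_i`
      Tendsto (fun i => ∫ x, f i x ∂(μ i)) (𝒟 : Filter I) (𝓝 (∫ x, g x ∂ν)) := by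
  let _ : MeasurableSpace (UProd 𝒟 M) := MeasurableSpace.generateFrom (ultraboxes 𝒟 M)
  set g := UProd.ultralimit 𝒟 f
  have hfIcc : ∀ i x, f i x ∈ Icc (-β) β := fun i x => abs_le.1 (hbd i x)
  have hg := UProd.tendsto_ultralimit (𝒟 := 𝒟) isCompact_Icc hfIcc
  have hgβ : ∀ x, |g x| ≤ β := fun x => Quotient.inductionOn x fun a =>
    abs_le.2 (isClosed_Icc.mem_of_tendsto (hg a) (.of_forall fun i => hfIcc i (a i)))
  have hgm : Measurable g := UProd.measurable_of_tendsto hg hf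
  have hlim : ∀ A : ∀ i, Set (M i), (∀ i, MeasurableSet (A i)) →
      Tendsto (fun i => μ i (A i)) 𝒟 (𝓝 (ν (ultrabox 𝒟 M A))) := fun A hA => by
    rw [hν A hA]
    exact 𝒟.tendsto_limUnder_of_isCompact isCompact_univ fun _ => mem_univ _
  have : ∀ i, IsFiniteMeasure (μ i) := fun i => ⟨(hμ i).trans_lt ENNReal.one_lt_top⟩
  have : IsFiniteMeasure ν := ⟨by
    have hmass := hlim _ fun _ => MeasurableSet.univ
    rw [UProd.ultrabox_univ] at hmass
    exact (le_of_tendsto' hmass hμ).trans_lt ENNReal.one_lt_top⟩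
  refine ⟨g, hg, hgm,
    tendsto_integral_of_tendsto_measureReal_of_null_frontier hf hgm hbd hgβ fun E hE hE₀ => ?_⟩
  simp only [measureReal_def]
  rw [← UProd.measure_ultrabox_eq_of_null_frontier hg ν hE₀]
  exact (ENNReal.tendsto_toReal (measure_ne_top _ _)).comp (hlim _ fun i => hf i hE)

/-- Lemma 3.6: let `(M_i, ℬ_i, μ_i)` be measure spaces with `μ_i(M_i) ≤ 1`, `𝒟` an
ultrafilter on `I`, and let `ν` be the (Carathéodory) extension, to the σ-algebra generated
by the ultraboxes of `M = ∏_𝒟 M_i`, of the premeasure `[A_i] ↦ lim_𝒟 μ_i(A_i)`.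
If `f_i : M_i → ℝ` are measurable with `|f_i| ≤ β`, then `f([a_i]) = lim_𝒟 f_i(a_i)` is a
well-defined function on `M` (i.e. there is a function `g` on `M` whose value at the class
of any representative `a` is the `𝒟`-limit of `i ↦ f_i (a_i)`), `g` is measurable for the
σ-algebra generated by the ultraboxes, and `∫_M g dν = lim_𝒟 ∫_{M_i} f_i dμ_i`. -/
theorem ultraproduct_integral_limit
    {I : Type*} (𝒟 : Ultrafilter I) (M : I → Type*) [∀ i, Nonempty (M i)]
    [∀ i, MeasurableSpace (M i)] (μ : ∀ i, Measure (M i))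
    (hμ : ∀ i, μ i Set.univ ≤ 1)
    (ν : @Measure (UProd 𝒟 M) (MeasurableSpace.generateFrom (ultraboxes 𝒟 M)))
    (hν : ∀ A : ∀ i, Set (M i), (∀ i, MeasurableSet (A i)) →
      ν (ultrabox 𝒟 M A) = limUnder (𝒟 : Filter I) fun i => μ i (A i))
    (β : ℝ) (hβ : 0 ≤ β)
    (f : ∀ i, M i → ℝ) (hf : ∀ i, Measurable (f i)) (hbd : ∀ i x, |f i x| ≤ β) :
    ∃ g : UProd 𝒟 M → ℝ,
      -- `g` is well defined: its value on any class is the `𝒟`-limit over representatives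
      (∀ a : ∀ i, M i,
        Tendsto (fun i => f i (a i)) (𝒟 : Filter I)
          (𝓝 (g (Quotient.mk (ultraSetoid 𝒟 M) a)))) ∧
      -- `g` is measurable with respect to the σ-algebra generated by the ultraboxes
      Measurable[MeasurableSpace.generateFrom (ultraboxes 𝒟 M)] g ∧
      -- `∫_M g dν = lim_𝒟 ∫_{M_i} f_i dμ_i`
      Tendsto (fun i => ∫ x, f i x ∂(μ i)) (𝒟 : Filter I) (𝓝 (∫ x, g x ∂ν)) :=
  ultraproduct_integral_limit_general 𝒟 M μ hμ ν hν β f hf hbd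
end
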